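/- arXiv:2403.19687 — 3 statements merged into one kernel-verified Lean document; each statement's English description precedes it below -/
import Mathlib

section
/- Let α, β be nonzero complex numbers, let p > 0 be a real number, let λ, μ be real numbers, and let U₁, U₂, U₃, U₄ be complex numbers satisfying the Andrianov relations (R1)–(R4). Then U₁⁴ = U₃U₁ + 2U₂² − 3(λ/√p)·U₂U₁ + (3 + (λ² − μ)/p)·U₁² − 2U₄ + 3(λ/√p)·U₃ − ((λ² + 2μ)/p)·U₂ + (2λ/√p + λμ/p^{3/2})·U₁ − (2 + λ²/p). -/
/-! Writing `L = λ/√p` and `M = μ/p`, the relations (R1)–(R4) successively solve for `c₁`, `τ₂`,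
`U₃`, `U₄` as polynomials in `U₁, U₂, L, M`; substituting these, the claimed expression for `U₁⁴`
becomes a polynomial identity. -/

theorem pow_four_eq_of_andrianov_relations {R : Type*} [CommRing R]
    (L M c τ U₁ U₂ U₃ U₄ : R)
    (hR1 : -L = U₁ - c)
    (hR2 : M = U₂ - U₁ * c + τ + 1)
    (hR3 : 0 = U₃ - U₂ * c + U₁ * (τ + 1) - c)
    (hR4 : 0 = U₄ - U₃ * c + U₂ * (τ + 1) - U₁ * c + 1) :
    U₁ ^ 4 = U₃ * U₁ + 2 * U₂ ^ 2 - 3 * L * U₂ * U₁ + (3 + (L ^ 2 - M)) * U₁ ^ 2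
      - 2 * U₄ + 3 * L * U₃ - (L ^ 2 + 2 * M) * U₂ + (2 * L + L * M) * U₁ - (2 + L ^ 2) := by
  obtain rfl : c = U₁ + L := by linear_combination hR1
  obtain rfl : τ = M - U₂ + U₁ * (U₁ + L) - 1 := by linear_combination -hR2
  obtain rfl : U₄ = U₃ * (U₁ + L) - U₂ * (M - U₂ + U₁ * (U₁ + L)) + U₁ * (U₁ + L) - 1 := by
    linear_combination -hR4
  obtain rfl : U₃ = U₂ * (U₁ + L) - U₁ * (M - U₂ + U₁ * (U₁ + L)) + (U₁ + L) := by
    linear_combination -hR3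
  ring

theorem andrianov_U1_fourth_general
    (p lam mu : ℝ) (hp : 0 < p)
    (U₁ U₂ U₃ U₄ : ℂ)
    (c₁ τ₂ : ℂ)
    (hR1 : -((lam : ℂ) / (Real.sqrt p : ℂ)) = U₁ - c₁)
    (hR2 : (mu : ℂ) / (p : ℂ) = U₂ - U₁ * c₁ + τ₂ + 1)
    (hR3 : (0 : ℂ) = U₃ - U₂ * c₁ + U₁ * (τ₂ + 1) - c₁)
    (hR4 : (0 : ℂ) = U₄ - U₃ * c₁ + U₂ * (τ₂ + 1) - U₁ * c₁ + 1) :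
    U₁ ^ 4 = U₃ * U₁ + 2 * U₂ ^ 2 - 3 * ((lam : ℂ) / (Real.sqrt p : ℂ)) * U₂ * U₁
      + (3 + ((lam : ℂ) ^ 2 - (mu : ℂ)) / (p : ℂ)) * U₁ ^ 2
      - 2 * U₄ + 3 * ((lam : ℂ) / (Real.sqrt p : ℂ)) * U₃
      - (((lam : ℂ) ^ 2 + 2 * (mu : ℂ)) / (p : ℂ)) * U₂
      + (2 * (lam : ℂ) / (Real.sqrt p : ℂ)
          + (lam : ℂ) * (mu : ℂ) / (Real.sqrt p : ℂ) ^ 3) * U₁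
      - (2 + (lam : ℂ) ^ 2 / (p : ℂ)) := by
  have hp_sq : (p : ℂ) = (Real.sqrt p : ℂ) ^ 2 := by exact_mod_cast (Real.sq_sqrt hp.le).symm
  rw [hp_sq] at hR2 ⊢
  linear_combination pow_four_eq_of_andrianov_relations _ _ _ _ _ _ _ _ hR1 hR2 hR3 hR4

/-- Equation (2.31): under the Andrianov relations (R1)–(R4),
`U₁⁴ = U₃U₁ + 2U₂² − 3(λ/√p)U₂U₁ + (3 + (λ² − μ)/p)U₁² − 2U₄ + 3(λ/√p)U₃
  − ((λ² + 2μ)/p)U₂ + (2λ/√p + λμ/p^{3/2})U₁ − (2 + λ²/p)`. -/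
theorem andrianov_U1_fourth
    (α β : ℂ) (hα : α ≠ 0) (hβ : β ≠ 0)
    (p lam mu : ℝ) (hp : 0 < p)
    (U₁ U₂ U₃ U₄ : ℂ)
    (c₁ τ₂ : ℂ)
    (hc₁ : c₁ = α + α⁻¹ + β + β⁻¹)
    (hτ₂ : τ₂ = 1 + α * β + α * β⁻¹ + α⁻¹ * β + α⁻¹ * β⁻¹)
    (hR1 : -((lam : ℂ) / (Real.sqrt p : ℂ)) = U₁ - c₁)
    (hR2 : (mu : ℂ) / (p : ℂ) = U₂ - U₁ * c₁ + τ₂ + 1)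
    (hR3 : (0 : ℂ) = U₃ - U₂ * c₁ + U₁ * (τ₂ + 1) - c₁)
    (hR4 : (0 : ℂ) = U₄ - U₃ * c₁ + U₂ * (τ₂ + 1) - U₁ * c₁ + 1) :
    U₁ ^ 4 = U₃ * U₁ + 2 * U₂ ^ 2 - 3 * ((lam : ℂ) / (Real.sqrt p : ℂ)) * U₂ * U₁
      + (3 + ((lam : ℂ) ^ 2 - (mu : ℂ)) / (p : ℂ)) * U₁ ^ 2
      - 2 * U₄ + 3 * ((lam : ℂ) / (Real.sqrt p : ℂ)) * U₃
      - (((lam : ℂ) ^ 2 + 2 * (mu : ℂ)) / (p : ℂ)) * U₂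
      + (2 * (lam : ℂ) / (Real.sqrt p : ℂ)
          + (lam : ℂ) * (mu : ℂ) / (Real.sqrt p : ℂ) ^ 3) * U₁
      - (2 + (lam : ℂ) ^ 2 / (p : ℂ)) :=
  andrianov_U1_fourth_general p lam mu hp U₁ U₂ U₃ U₄ c₁ τ₂ hR1 hR2 hR3 hR4
end

section
/- Let α, β be nonzero complex numbers, let p > 0 be a real number, let λ, μ be real numbers, and let U₁, U₂, U₃, U₄ be complex numbers satisfying the Andrianov relations (R1) and (R2). Then τ₄ = U₁⁴ − 2U₂U₁² + 2(λ/√p)·U₁³ + U₂² − 2(λ/√p)·U₂U₁ + ((λ² + 2μ)/p − 2)·U₁² − 2(μ/p)·U₂ + (2λμ/p^{3/2} − 4λ/√p)·U₁ + μ²/p² − 2λ²/p + 1. -/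
/-! Writing `a = α + α⁻¹` and `b = β + β⁻¹`, one has `c₁ = a + b`, `τ₂ = 1 + ab` and
`τ₄ = 1 + (a² - 2)(b² - 2)`, whence `τ₄ = τ₂² + 2τ₂ - 2c₁² + 2`. Relations (R1) and (R2) express
`c₁` and `τ₂` as polynomials in `U₁`, `U₂`, `λ/√p` and `μ/p`; substituting them and using
`p = (√p)²` gives the formula. -/

section

variable {K : Type*} [Field K]

def andrianovC (α β : K) (m : ℕ) : K := α ^ m + α⁻¹ ^ m + β ^ m + β⁻¹ ^ m

/-- The paper's `τ_{2m}`. -/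
def andrianovTau (α β : K) (m : ℕ) : K :=
  1 + α ^ m * β ^ m + α ^ m * β⁻¹ ^ m + α⁻¹ ^ m * β ^ m + α⁻¹ ^ m * β⁻¹ ^ m

theorem andrianovTau_two_eq {α β : K} (hα : α ≠ 0) (hβ : β ≠ 0) :
    andrianovTau α β 2 =
      andrianovTau α β 1 ^ 2 + 2 * andrianovTau α β 1 - 2 * andrianovC α β 1 ^ 2 + 2 := by
  unfold andrianovTau andrianovC
  field_simp
  ring

end

theorem sq_add_two_mul_sub_two_mul_sq_add_two_eq_of_relations {R : Type*} [CommRing R]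
    {U₁ U₂ x y c τ : R} (h₁ : -x = U₁ - c) (h₂ : y = U₂ - U₁ * c + τ + 1) :
    τ ^ 2 + 2 * τ - 2 * c ^ 2 + 2 =
      U₁ ^ 4 - 2 * U₂ * U₁ ^ 2 + 2 * x * U₁ ^ 3 + U₂ ^ 2 - 2 * x * U₂ * U₁
        + (x ^ 2 + 2 * y - 2) * U₁ ^ 2 - 2 * y * U₂ + (2 * x * y - 4 * x) * U₁
        + y ^ 2 - 2 * x ^ 2 + 1 := by
  obtain rfl : c = U₁ + x := by linear_combination h₁
  obtain rfl : τ = y - U₂ + U₁ * (U₁ + x) - 1 := by linear_combination -h₂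
  ring

theorem andrianov_pre_tau4_general
    (α β : ℂ) (hα : α ≠ 0) (hβ : β ≠ 0)
    (p lam mu : ℝ) (hp : 0 < p)
    (U₁ U₂ : ℂ)
    (c₁ τ₂ τ₄ : ℂ)
    (hc₁ : c₁ = α + α⁻¹ + β + β⁻¹)
    (hτ₂ : τ₂ = 1 + α * β + α * β⁻¹ + α⁻¹ * β + α⁻¹ * β⁻¹)
    (hτ₄ : τ₄ = 1 + α ^ 2 * β ^ 2 + α ^ 2 * β⁻¹ ^ 2 + α⁻¹ ^ 2 * β ^ 2 + α⁻¹ ^ 2 * β⁻¹ ^ 2)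
    (hR1 : -((lam : ℂ) / (Real.sqrt p : ℂ)) = U₁ - c₁)
    (hR2 : (mu : ℂ) / (p : ℂ) = U₂ - U₁ * c₁ + τ₂ + 1) :
    τ₄ = U₁ ^ 4 - 2 * U₂ * U₁ ^ 2 + 2 * ((lam : ℂ) / (Real.sqrt p : ℂ)) * U₁ ^ 3
      + U₂ ^ 2 - 2 * ((lam : ℂ) / (Real.sqrt p : ℂ)) * U₂ * U₁
      + (((lam : ℂ) ^ 2 + 2 * (mu : ℂ)) / (p : ℂ) - 2) * U₁ ^ 2
      - 2 * ((mu : ℂ) / (p : ℂ)) * U₂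
      + (2 * (lam : ℂ) * (mu : ℂ) / (Real.sqrt p : ℂ) ^ 3
          - 4 * (lam : ℂ) / (Real.sqrt p : ℂ)) * U₁
      + (mu : ℂ) ^ 2 / (p : ℂ) ^ 2 - 2 * (lam : ℂ) ^ 2 / (p : ℂ) + 1 := by
  have hc : c₁ = andrianovC α β 1 := by simp only [andrianovC, pow_one, hc₁]
  have hτ : τ₂ = andrianovTau α β 1 := by simp only [andrianovTau, pow_one, hτ₂]
  have hs : (Real.sqrt p : ℂ) ^ 2 = p := by exact_mod_cast Real.sq_sqrt hp.le
  have hs₀ : (Real.sqrt p : ℂ) ≠ 0 := by exact_mod_cast (Real.sqrt_pos.2 hp).ne'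
  rw [← hs] at hR2 ⊢
  rw [hτ₄, ← andrianovTau, andrianovTau_two_eq hα hβ, ← hc, ← hτ,
    sq_add_two_mul_sub_two_mul_sq_add_two_eq_of_relations hR1 hR2]
  field_simp

/-- Equation (2.28): under the Andrianov relations (R1) and (R2),
`τ₄` is expressed as a polynomial in `U₁, U₂` (of degree up to 4). -/
theorem andrianov_pre_tau4
    (α β : ℂ) (hα : α ≠ 0) (hβ : β ≠ 0)
    (p lam mu : ℝ) (hp : 0 < p)
    (U₁ U₂ U₃ U₄ : ℂ)
    (c₁ τ₂ τ₄ : ℂ)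
    (hc₁ : c₁ = α + α⁻¹ + β + β⁻¹)
    (hτ₂ : τ₂ = 1 + α * β + α * β⁻¹ + α⁻¹ * β + α⁻¹ * β⁻¹)
    (hτ₄ : τ₄ = 1 + α ^ 2 * β ^ 2 + α ^ 2 * β⁻¹ ^ 2 + α⁻¹ ^ 2 * β ^ 2 + α⁻¹ ^ 2 * β⁻¹ ^ 2)
    (hR1 : -((lam : ℂ) / (Real.sqrt p : ℂ)) = U₁ - c₁)
    (hR2 : (mu : ℂ) / (p : ℂ) = U₂ - U₁ * c₁ + τ₂ + 1) :
    τ₄ = U₁ ^ 4 - 2 * U₂ * U₁ ^ 2 + 2 * ((lam : ℂ) / (Real.sqrt p : ℂ)) * U₁ ^ 3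
      + U₂ ^ 2 - 2 * ((lam : ℂ) / (Real.sqrt p : ℂ)) * U₂ * U₁
      + (((lam : ℂ) ^ 2 + 2 * (mu : ℂ)) / (p : ℂ) - 2) * U₁ ^ 2
      - 2 * ((mu : ℂ) / (p : ℂ)) * U₂
      + (2 * (lam : ℂ) * (mu : ℂ) / (Real.sqrt p : ℂ) ^ 3
          - 4 * (lam : ℂ) / (Real.sqrt p : ℂ)) * U₁
      + (mu : ℂ) ^ 2 / (p : ℂ) ^ 2 - 2 * (lam : ℂ) ^ 2 / (p : ℂ) + 1 :=
  andrianov_pre_tau4_general α β hα hβ p lam mu hp U₁ U₂ c₁ τ₂ τ₄ hc₁ hτ₂ hτ₄ hR1 hR2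
end

section
/- Let Φ : ℝ → ℝ be an even Schwartz function whose Fourier transform Φ̂ is supported in [−1, 1]. Then ∫_ℝ Φ(x)·(1 − sin(2πx)/(2πx)) dx = Φ̂(0) − Φ(0)/2, where the factor sin(2πx)/(2πx) is interpreted as 1 at x = 0. (In other words, ∫_ℝ Φ(x) W(Sp)(x) dx = Φ̂(0) − Φ(0)/2 for the symplectic density W(Sp)(x) = 1 − sin(2πx)/(2πx).) -/
/-!
The Fourier transform of the indicator of `[-1, 1]` is `2 sinc (2πx) = sin (2πx) / (πx)`. By the
multiplication formula `∫ Φ · 𝓕 g = ∫ 𝓕 Φ · g`, pairing `Φ` with this kernel gives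
`∫_{[-1, 1]} Φ̂`, which is all of `∫ Φ̂ = Φ(0)` (Fourier inversion at `0`) because `Φ̂` vanishes
outside `[-1, 1]`. Hence `∫ Φ(x) sin (2πx) / (2πx) dx = Φ(0) / 2`, while `∫ Φ = Φ̂(0)`.
-/

open MeasureTheory Complex FourierTransform Set

namespace Real

section InnerProductSpace

variable {V : Type*} [NormedAddCommGroup V] [InnerProductSpace ℝ V] [MeasurableSpace V]
  [BorelSpace V] [FiniteDimensional ℝ V]

theorem integral_mul_fourier_eq_integral_fourier_mul {f g : V → ℂ} (hf : Integrable f)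
    (hg : Integrable g) : ∫ x, f x * 𝓕 g x = ∫ ξ, 𝓕 f ξ * g ξ := by
  simpa using! (VectorFourier.integral_fourierIntegral_smul_eq_flip (L := innerₗ V)
    continuous_fourierChar continuous_inner hf hg).symm

theorem integral_fourier_eq_apply_zero {E : Type*} [NormedAddCommGroup E] [NormedSpace ℂ E]
    [CompleteSpace E] {f : V → E} (hf : Integrable f) (h'f : Integrable (𝓕 f))
    (hf0 : ContinuousAt f 0) : ∫ ξ, 𝓕 f ξ = f 0 := by
  simpa [fourierInv_eq] using hf.fourierInv_fourier_eq h'f hf0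

end InnerProductSpace

theorem fourier_apply_zero {E : Type*} [NormedAddCommGroup E] [NormedSpace ℂ E]
    (f : ℝ → E) : 𝓕 f 0 = ∫ x, f x := by
  simp [fourier_real_eq]

theorem mul_sinc (x : ℝ) : x * sinc x = sin x := by
  rcases eq_or_ne x 0 with rfl | hx
  · simp
  · rw [sinc_of_ne_zero hx, mul_div_cancel₀ _ hx]

theorem fourier_indicator_Icc {a : ℝ} (ha : 0 ≤ a) (x : ℝ) :
    𝓕 ((Icc (-a) a).indicator (fun _ ↦ (1 : ℂ))) x =
      ((2 * a * sinc (2 * π * a * x) : ℝ) : ℂ) := by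
  rw [fourier_real_eq_integral_exp_smul]
  simp_rw [← indicator_smul_apply (Icc (-a) a) (fun v ↦ cexp (↑(-2 * π * v * x) * I)),
    smul_eq_mul, mul_one]
  rw [integral_indicator measurableSet_Icc, integral_Icc_eq_integral_Ioc,
    ← intervalIntegral.integral_of_le (by linarith)]
  rcases eq_or_ne x 0 with rfl | hx
  · simp; ring
  have hc : (-2 * π * x : ℂ) * I ≠ 0 := by simp [pi_ne_zero, hx]
  have hx' : (x : ℂ) ≠ 0 := ofReal_ne_zero.mpr hx
  have hsin : 2 * a * sinc (2 * π * a * x) = sin (2 * π * a * x) / (π * x) := by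
    rw [eq_div_iff (by simp [pi_ne_zero, hx]), ← mul_sinc]; ring
  simp_rw [show ∀ v : ℝ, ((-2 * π * v * x : ℝ) : ℂ) * I = (-2 * π * x : ℂ) * I * v from
    fun v ↦ by push_cast; ring]
  rw [integral_exp_mul_complex hc, hsin, div_eq_iff hc]
  push_cast
  rw [Complex.sin]
  field_simp
  ring_nf
  rw [I_sq]
  ring

theorem integral_mul_sinc_eq_setIntegral_fourier {f : ℝ → ℂ} (hf : Integrable f) {a : ℝ}
    (ha : 0 ≤ a) :
    ∫ x, f x * ((2 * a * sinc (2 * π * a * x) : ℝ) : ℂ) = ∫ ξ in Icc (-a) a, 𝓕 f ξ := by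
  have hbox : Integrable ((Icc (-a) a).indicator (fun _ ↦ (1 : ℂ))) :=
    (integrable_indicator_iff measurableSet_Icc).mpr (integrableOn_const measure_Icc_lt_top.ne)
  simp_rw [← fourier_indicator_Icc ha, integral_mul_fourier_eq_integral_fourier_mul hf hbox,
    ← integral_indicator measurableSet_Icc]
  congr 1 with ξ
  simp [indicator_apply]

theorem integral_mul_sinc_eq_apply_zero {f : ℝ → ℂ} (hf : Integrable f)
    (hf0 : ContinuousAt f 0) {a : ℝ} (ha : 0 ≤ a) (hsupp : ∀ ξ, a < |ξ| → 𝓕 f ξ = 0) :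
    ∫ x, f x * ((2 * a * sinc (2 * π * a * x) : ℝ) : ℂ) = f 0 := by
  have hsupp' : ∀ ξ ∉ Icc (-a) a, 𝓕 f ξ = 0 := fun ξ hξ ↦
    hsupp ξ (by rwa [mem_Icc, ← abs_le, not_le] at hξ)
  have hcont : Continuous (𝓕 f) :=
    VectorFourier.fourierIntegral_continuous continuous_fourierChar continuous_inner hf
  have hint : Integrable (𝓕 f) :=
    hcont.integrable_of_hasCompactSupport (HasCompactSupport.intro isCompact_Icc hsupp')
  rw [integral_mul_sinc_eq_setIntegral_fourier hf ha,
    setIntegral_eq_integral_of_forall_compl_eq_zero hsupp',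
    integral_fourier_eq_apply_zero hf hint hf0]

end Real

open Real

theorem symplectic_density_integral_general (Φ : SchwartzMap ℝ ℝ)
    (hsupp : ∀ y : ℝ, 1 < |y| → FourierTransform.fourier (fun x : ℝ => (Φ x : ℂ)) y = 0) :
    ∫ x : ℝ, (Φ x : ℂ) *
        (1 - if x = 0 then 1 else
          ((Real.sin (2 * Real.pi * x) / (2 * Real.pi * x) : ℝ) : ℂ)) =
      FourierTransform.fourier (fun x : ℝ => (Φ x : ℂ)) 0 - (Φ 0 : ℂ) / 2 := by
  have hf : Integrable fun x ↦ (Φ x : ℂ) := Φ.integrable.ofReal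
  have hpair := integral_mul_sinc_eq_apply_zero hf (continuous_ofReal.comp Φ.continuous).continuousAt
    zero_le_one hsupp
  simp only [mul_one] at hpair
  have hW : ∀ x : ℝ, (if x = 0 then 1 else ((Real.sin (2 * π * x) / (2 * π * x) : ℝ) : ℂ)) =
      ((2 * sinc (2 * π * x) : ℝ) : ℂ) / 2 := by
    intro x
    rcases eq_or_ne x 0 with rfl | hx
    · simp
    · simp [hx, sinc_of_ne_zero, pi_ne_zero]
  have hint : Integrable fun x ↦ (Φ x : ℂ) * ((2 * sinc (2 * π * x) : ℝ) : ℂ) :=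
    hf.mul_bdd (c := 2) (by fun_prop) (ae_of_all _ fun x ↦ by
      simpa [abs_mul] using abs_sinc_le_one (2 * π * x))
  simp_rw [hW, mul_sub, mul_one, ← mul_div_assoc]
  rw [integral_sub hf (hint.div_const 2), integral_div, hpair, fourier_apply_zero]

/-- For an even Schwartz test function `Φ` whose Fourier transform is supported in
`[−1, 1]`, one has `∫ Φ(x) W(Sp)(x) dx = Φ̂(0) − Φ(0)/2`, where
`W(Sp)(x) = 1 − sin(2πx)/(2πx)` is the symplectic density. -/
theorem symplectic_density_integral (Φ : SchwartzMap ℝ ℝ)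
    (heven : ∀ x : ℝ, Φ (-x) = Φ x)
    (hsupp : ∀ y : ℝ, 1 < |y| → FourierTransform.fourier (fun x : ℝ => (Φ x : ℂ)) y = 0) :
    ∫ x : ℝ, (Φ x : ℂ) *
        (1 - if x = 0 then 1 else
          ((Real.sin (2 * Real.pi * x) / (2 * Real.pi * x) : ℝ) : ℂ)) =
      FourierTransform.fourier (fun x : ℝ => (Φ x : ℂ)) 0 - (Φ 0 : ℂ) / 2 :=
  symplectic_density_integral_general Φ hsupp
end
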